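/- arXiv:1808.07595 — 2 statements merged into one kernel-verified Lean document; each statement's English description precedes it below -/
import Mathlib

section
/- Let $\Lambda$ be the 12-element set of unit vectors from the previous construction, satisfying $\frac{1}{8}\sum_{\bar\xi \in \Lambda}(\mathrm{Id} - \bar\xi \otimes \bar\xi) = \mathrm{Id}$ and $-\Lambda = \Lambda$. Then there exist $\varepsilon_\gamma > 0$ and smooth positive functions $\gamma_{(\bar\xi)} : B_{\varepsilon_\gamma}(\mathrm{Id}) \to (0,\infty)$, indexed by $\bar\xi \in \Lambda$, such that $\gamma_{(\bar\xi)} = \gamma_{(-\bar\xi)}$ and for every symmetric matrix $R \in B_{\varepsilon_\gamma}(\mathrm{Id})$ one has $R = \frac{1}{2}\sum_{\bar\xi \in \Lambda} \left(\gamma_{(\bar\xi)}(R)\right)^2 (\mathrm{Id} - \bar\xi \otimes \bar\xi)$. -/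
set_option maxHeartbeats 2000000


/-- The 12 vectors of `Λ = Λ⁺ ∪ Λ⁻`, as a list. -/
noncomputable def LambdaList : List (Fin 3 → ℝ) :=
  [![3/5, 4/5, 0], ![3/5, -4/5, 0], ![0, 3/5, 4/5], ![0, 3/5, -4/5],
   ![4/5, 0, 3/5], ![-4/5, 0, 3/5],
   ![-3/5, -4/5, 0], ![-3/5, 4/5, 0], ![0, -3/5, -4/5], ![0, -3/5, 4/5],
   ![-4/5, 0, -3/5], ![4/5, 0, -3/5]]

/-- The ball of radius `ε` (in the Frobenius norm) around the identity in the
space of real symmetric `3 × 3` matrices. -/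
noncomputable def symBall (ε : ℝ) : Set (Matrix (Fin 3) (Fin 3) ℝ) :=
  {R | R.IsSymm ∧ Real.sqrt (∑ i, ∑ j, (R i j - (1 : Matrix (Fin 3) (Fin 3) ℝ) i j) ^ 2) < ε}

attribute [local instance] Matrix.frobeniusNormedAddCommGroup Matrix.frobeniusNormedSpace

/-- The explicit linear-in-`R` coefficient functional. -/
noncomputable def gfun (ξ : Fin 3 → ℝ) (R : Matrix (Fin 3) (Fin 3) ℝ) : ℝ :=
  (R 0 0 + R 1 1 + R 2 2) / 4
  + (625/386) * ((ξ 1)^2 * (ξ 2)^2 - (ξ 0)^4) * R 0 0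
  + (625/386) * ((ξ 0)^2 * (ξ 2)^2 - (ξ 1)^4) * R 1 1
  + (625/386) * ((ξ 0)^2 * (ξ 1)^2 - (ξ 2)^4) * R 2 2
  - (625/288) * (ξ 0 * ξ 1 * R 0 1 + ξ 1 * ξ 2 * R 1 2 + ξ 0 * ξ 2 * R 0 2)

lemma entry_smooth (i j : Fin 3) :
    ContDiff ℝ (⊤ : ℕ∞) (fun R : Matrix (Fin 3) (Fin 3) ℝ => R i j) := by
  have : (fun R : Matrix (Fin 3) (Fin 3) ℝ => R i j)
      = (LinearMap.toContinuousLinearMap (⟨⟨fun R => R i j, fun _ _ => rfl⟩, fun _ _ => rfl⟩ :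
          Matrix (Fin 3) (Fin 3) ℝ →ₗ[ℝ] ℝ) : Matrix (Fin 3) (Fin 3) ℝ →L[ℝ] ℝ) := rfl
  rw [this]
  exact ContinuousLinearMap.contDiff _

lemma gfun_smooth (ξ : Fin 3 → ℝ) : ContDiff ℝ (⊤ : ℕ∞) (gfun ξ) := by
  unfold gfun
  exact (((((((entry_smooth 0 0).add (entry_smooth 1 1)).add (entry_smooth 2 2)).div_const 4).add
    ((contDiff_const).mul (entry_smooth 0 0))).add
    ((contDiff_const).mul (entry_smooth 1 1))).add
    ((contDiff_const).mul (entry_smooth 2 2))).sub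
    ((contDiff_const).mul ((((contDiff_const).mul (entry_smooth 0 1)).add
      ((contDiff_const).mul (entry_smooth 1 2))).add
      ((contDiff_const).mul (entry_smooth 0 2))))

/-- Entry bounds from membership in the ball. -/
lemma entry_bound {ε : ℝ} {R : Matrix (Fin 3) (Fin 3) ℝ} (hR : R ∈ symBall ε)
    (i j : Fin 3) : |R i j - (1 : Matrix (Fin 3) (Fin 3) ℝ) i j| < ε := by
  obtain ⟨-, h⟩ := hR
  refine lt_of_le_of_lt ?_ h
  rw [← Real.sqrt_sq_eq_abs]
  apply Real.sqrt_le_sqrt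
  calc (R i j - (1 : Matrix (Fin 3) (Fin 3) ℝ) i j) ^ 2
      ≤ ∑ j', (R i j' - (1 : Matrix (Fin 3) (Fin 3) ℝ) i j') ^ 2 :=
        Finset.single_le_sum (f := fun j' => (R i j' - (1 : Matrix (Fin 3) (Fin 3) ℝ) i j') ^ 2)
          (fun _ _ => sq_nonneg _) (Finset.mem_univ j)
    _ ≤ ∑ i', ∑ j', (R i' j' - (1 : Matrix (Fin 3) (Fin 3) ℝ) i' j') ^ 2 :=
        Finset.single_le_sum (f := fun i' => ∑ j', (R i' j' - (1 : Matrix (Fin 3) (Fin 3) ℝ) i' j') ^ 2)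
          (fun _ _ => Finset.sum_nonneg fun _ _ => sq_nonneg _) (Finset.mem_univ i)

lemma gfun_pos {R : Matrix (Fin 3) (Fin 3) ℝ} (hR : R ∈ symBall (1/28)) :
    ∀ ξ ∈ LambdaList, 0 < gfun ξ R := by
  have h00 := abs_lt.mp (entry_bound hR 0 0)
  have h11 := abs_lt.mp (entry_bound hR 1 1)
  have h22 := abs_lt.mp (entry_bound hR 2 2)
  have h01 := abs_lt.mp (entry_bound hR 0 1)
  have h12 := abs_lt.mp (entry_bound hR 1 2)
  have h02 := abs_lt.mp (entry_bound hR 0 2)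
  simp only [Matrix.one_apply_eq, Matrix.one_apply_ne (by decide : (0 : Fin 3) ≠ 1),
    Matrix.one_apply_ne (by decide : (1 : Fin 3) ≠ 2),
    Matrix.one_apply_ne (by decide : (0 : Fin 3) ≠ 2), sub_zero] at h00 h11 h22 h01 h12 h02
  intro ξ hξ
  fin_cases hξ <;>
    · simp only [gfun, Matrix.cons_val_zero, Matrix.cons_val_one, Matrix.head_cons,
        Matrix.cons_val_two, Matrix.tail_cons]
      norm_num
      linarith [h00.1, h00.2, h11.1, h11.2, h22.1, h22.2, h01.1, h01.2, h12.1, h12.2,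
        h02.1, h02.2]

theorem stmt_6 :
    ∃ (εγ : ℝ), 0 < εγ ∧
      ∃ γ : (Fin 3 → ℝ) → Matrix (Fin 3) (Fin 3) ℝ → ℝ,
        -- each `γ_{(ξ)}` is smooth and positive on the ball
        (∀ ξ ∈ LambdaList, ContDiffOn ℝ (⊤ : ℕ∞) (γ ξ) (symBall εγ)) ∧
        (∀ ξ ∈ LambdaList, ∀ R ∈ symBall εγ, 0 < γ ξ R) ∧
        -- `γ_{(ξ)} = γ_{(-ξ)}`
        (∀ ξ ∈ LambdaList, γ ξ = γ (-ξ)) ∧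
        -- the decomposition `R = ½ ∑_{ξ ∈ Λ} γ_{(ξ)}(R)² (Id - ξ ⊗ ξ)`
        (∀ R ∈ symBall εγ,
          R = (1 / 2 : ℝ) • (LambdaList.map fun ξ =>
            (γ ξ R) ^ 2 • ((1 : Matrix (Fin 3) (Fin 3) ℝ) - Matrix.of fun i j => ξ i * ξ j)).sum) := by
  refine ⟨1/28, by norm_num, fun ξ R => Real.sqrt (gfun ξ R), ?_, ?_, ?_, ?_⟩
  · -- smoothness
    intro ξ hξ R hR
    exact (((Real.contDiffAt_sqrt (ne_of_gt (gfun_pos hR ξ hξ))).comp R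
      (gfun_smooth ξ).contDiffAt)).contDiffWithinAt
  · -- positivity
    intro ξ hξ R hR
    exact Real.sqrt_pos.mpr (gfun_pos hR ξ hξ)
  · -- symmetry in ξ
    intro ξ _
    funext R
    unfold gfun
    simp only [Pi.neg_apply]
    ring_nf
  · -- the decomposition
    intro R hR
    have hmap : (LambdaList.map fun ξ =>
        (Real.sqrt (gfun ξ R)) ^ 2 • ((1 : Matrix (Fin 3) (Fin 3) ℝ) - Matrix.of fun i j => ξ i * ξ j))
        = LambdaList.map fun ξ =>
        (gfun ξ R) • ((1 : Matrix (Fin 3) (Fin 3) ℝ) - Matrix.of fun i j => ξ i * ξ j) := by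
      refine List.map_congr_left fun ξ hξ => ?_
      rw [Real.sq_sqrt (gfun_pos hR ξ hξ).le]
    rw [hmap]
    have e10 : R 1 0 = R 0 1 := hR.1.apply 0 1
    have e20 : R 2 0 = R 0 2 := hR.1.apply 0 2
    have e21 : R 2 1 = R 1 2 := hR.1.apply 1 2
    ext i j
    simp only [LambdaList, List.map_cons, List.map_nil, List.sum_cons, List.sum_nil, add_zero,
      Matrix.smul_apply, Matrix.add_apply, Matrix.sub_apply, Matrix.of_apply, smul_eq_mul, gfun]
    fin_cases i <;> fin_cases j <;>
      simp [Matrix.one_apply, Fin.ext_iff, Matrix.cons_val_zero, Matrix.cons_val_one,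
        Matrix.head_cons, Matrix.cons_val_two, Matrix.tail_cons] <;>
      first
        | rfl
        | linarith [e10, e20, e21]
end

section
/- Let $f, g \in C^\infty(\mathbb{T}^3)$ and suppose $g$ is $(\mathbb{T}/N)^3$-periodic for some $N \in \mathbb{N}$ (i.e., $g(x + \tfrac{2\pi}{N} k) = g(x)$ for all $k \in \mathbb{Z}^3$). Then for every $1 \le p \le \infty$ there is a constant $C_p$, independent of $f, g, N$, such that $\|f g\|_{L^p(\mathbb{T}^3)} \le \|f\|_{L^p(\mathbb{T}^3)} \|g\|_{L^p(\mathbb{T}^3)} + C_p N^{-1/p} \|f\|_{C^1(\mathbb{T}^3)} \|g\|_{L^p(\mathbb{T}^3)}$. -/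
open MeasureTheory
open scoped ENNReal NNReal

/-- The fundamental domain `(0, 2π]³` of the torus `𝕋³ = (ℝ/2πℤ)³`. -/
noncomputable def torusBox : Set (Fin 3 → ℝ) :=
  Set.univ.pi fun _ => Set.Ioc 0 (2 * Real.pi)

/-- The `C¹` norm `‖f‖_{L^∞} + ‖∇f‖_{L^∞}` of a function on the torus. -/
noncomputable def C1norm (f : (Fin 3 → ℝ) → ℝ) : ℝ :=
  (⨆ x, |f x|) + ⨆ x, Real.sqrt (∑ i, (fderiv ℝ f x (Pi.single i 1)) ^ 2)



-- MVT lemma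
lemma rpow_sub_rpow_le (pr M a b : ℝ) (hpr : 1 ≤ pr) (hb : 0 ≤ b) (hba : b ≤ a) (haM : a ≤ M) :
    a ^ pr - b ^ pr ≤ pr * M ^ (pr - 1) * (a - b) := by
  rcases eq_or_lt_of_le hba with rfl | hlt
  · simp
  have hM : 0 ≤ M := le_trans (hb.trans hba) haM
  have hcont : ContinuousOn (fun x : ℝ => x ^ pr) (Set.Icc b a) := by
    apply ContinuousOn.rpow_const continuousOn_id
    intro x _
    right; linarith
  have hderiv : ∀ x ∈ Set.Ioo b a, HasDerivAt (fun x : ℝ => x ^ pr) (pr * x ^ (pr - 1)) x := by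
    intro x _
    simpa [mul_comm] using Real.hasDerivAt_rpow_const (x := x) (p := pr) (Or.inr hpr)
  obtain ⟨c, hc, hceq⟩ := exists_hasDerivAt_eq_slope (fun x : ℝ => x ^ pr)
    (fun x => pr * x ^ (pr - 1)) hlt hcont hderiv
  have h1 : a ^ pr - b ^ pr = pr * c ^ (pr - 1) * (a - b) := by
    have hab : a - b ≠ 0 := by linarith
    field_simp at hceq
    linarith [hceq]
  rw [h1]
  have hc0 : 0 ≤ c := le_trans hb hc.1.le
  have : c ^ (pr - 1) ≤ M ^ (pr - 1) :=
    Real.rpow_le_rpow hc0 (le_trans hc.2.le haM) (by linarith)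
  have hpr0 : 0 < pr := by linarith
  have h2 : pr * c ^ (pr - 1) ≤ pr * M ^ (pr - 1) := by
    exact mul_le_mul_of_nonneg_left this hpr0.le
  exact mul_le_mul_of_nonneg_right h2 (by linarith)

abbrev V3 := Fin 3 → ℝ

noncomputable def gradNorm (f : V3 → ℝ) (x : V3) : ℝ :=
  Real.sqrt (∑ i, (fderiv ℝ f x (Pi.single i 1)) ^ 2)

-- every point is a periodic translate of a point in the compact box [0,2π]³
lemma exists_translate (x : V3) : ∃ k : Fin 3 → ℤ,
    (x + (2 * Real.pi) • fun i => (k i : ℝ)) ∈ Set.univ.pi fun _ => Set.Icc 0 (2 * Real.pi) := by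
  have h2π : (0:ℝ) < 2 * Real.pi := by positivity
  refine ⟨fun i => -⌊x i / (2 * Real.pi)⌋, fun i _ => ?_⟩
  have : x i + 2 * Real.pi * (-⌊x i / (2 * Real.pi)⌋ : ℝ)
      = 2 * Real.pi * Int.fract (x i / (2 * Real.pi)) := by
    rw [Int.fract]
    field_simp
    ring
  simp only [Pi.add_apply, Pi.smul_apply, smul_eq_mul, Int.cast_neg]
  rw [this]
  have h1 := Int.fract_nonneg (x i / (2 * Real.pi))
  have h2 := (Int.fract_lt_one (x i / (2 * Real.pi))).le
  constructor
  · nlinarith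
  · nlinarith

lemma bddAbove_of_periodic (h : V3 → ℝ) (hc : Continuous h)
    (hper : ∀ (x : V3) (k : Fin 3 → ℤ), h (x + (2 * Real.pi) • fun i => (k i : ℝ)) = h x) :
    BddAbove (Set.range h) := by
  have hK : IsCompact (Set.univ.pi fun _ : Fin 3 => Set.Icc (0:ℝ) (2 * Real.pi)) :=
    isCompact_univ_pi fun _ => isCompact_Icc
  have himg : Set.range h ⊆ h '' (Set.univ.pi fun _ : Fin 3 => Set.Icc (0:ℝ) (2 * Real.pi)) := by
    rintro - ⟨x, rfl⟩
    obtain ⟨k, hk⟩ := exists_translate x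
    exact ⟨_, hk, hper x k⟩
  exact ((hK.image hc).bddAbove).mono himg

lemma fderiv_periodic (f : V3 → ℝ) (hf : ContDiff ℝ (⊤ : ℕ∞) f)
    (hper : ∀ (x : V3) (k : Fin 3 → ℤ), f (x + (2 * Real.pi) • fun i => (k i : ℝ)) = f x)
    (x : V3) (k : Fin 3 → ℤ) :
    fderiv ℝ f (x + (2 * Real.pi) • fun i => (k i : ℝ)) = fderiv ℝ f x := by
  set v : V3 := (2 * Real.pi) • fun i => (k i : ℝ)
  have hdf : Differentiable ℝ f := hf.differentiable (by simp)
  have h1 : (fun y => f (y + v)) = f := funext fun y => hper y k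
  have h2 : fderiv ℝ (fun y => f (y + v)) x = fderiv ℝ f (x + v) := by
    have := ((hdf (x + v)).hasFDerivAt.comp x
      ((hasFDerivAt_id x).add_const v)).fderiv
    simpa [Function.comp_def] using this
  rw [← h2, h1]

lemma gradNorm_cont (f : V3 → ℝ) (hf : ContDiff ℝ (⊤ : ℕ∞) f) : Continuous (gradNorm f) := by
  apply Real.continuous_sqrt.comp
  apply continuous_finset_sum
  intro i _
  have h1 : Continuous (fderiv ℝ f) := (hf.fderiv_right (m := (⊤ : ℕ∞)) (by simp)).continuous
  exact ((ContinuousLinearMap.apply ℝ ℝ (Pi.single i 1)).continuous.comp h1).pow 2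

lemma gradNorm_le_C1 (f : V3 → ℝ) (hf : ContDiff ℝ (⊤ : ℕ∞) f)
    (hper : ∀ (x : V3) (k : Fin 3 → ℤ), f (x + (2 * Real.pi) • fun i => (k i : ℝ)) = f x)
    (x : V3) : gradNorm f x ≤ C1norm f := by
  have hb : BddAbove (Set.range (gradNorm f)) := by
    apply bddAbove_of_periodic _ (gradNorm_cont f hf)
    intro x k
    unfold gradNorm
    rw [fderiv_periodic f hf hper x k]
  have h1 : gradNorm f x ≤ ⨆ y, gradNorm f y := le_ciSup hb x
  have h2 : 0 ≤ ⨆ y, |f y| := Real.iSup_nonneg fun y => abs_nonneg _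
  unfold C1norm
  unfold gradNorm at h1 ⊢
  linarith

lemma abs_le_C1 (f : V3 → ℝ) (hf : ContDiff ℝ (⊤ : ℕ∞) f)
    (hper : ∀ (x : V3) (k : Fin 3 → ℤ), f (x + (2 * Real.pi) • fun i => (k i : ℝ)) = f x)
    (x : V3) : |f x| ≤ C1norm f := by
  have hb : BddAbove (Set.range fun y => |f y|) := by
    apply bddAbove_of_periodic _ (hf.continuous.abs)
    intro x k; simp [hper x k]
  have h1 : |f x| ≤ ⨆ y, |f y| := le_ciSup hb x
  have h2 : 0 ≤ ⨆ y, gradNorm f y := Real.iSup_nonneg fun y => Real.sqrt_nonneg _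
  unfold C1norm
  unfold gradNorm at h2
  linarith

lemma sum_abs_le (a : Fin 3 → ℝ) : ∑ i, |a i| ≤ Real.sqrt 3 * Real.sqrt (∑ i, (a i) ^ 2) := by
  have h := Finset.sum_mul_sq_le_sq_mul_sq Finset.univ (fun _ => (1:ℝ)) (fun i => |a i|)
  simp only [one_mul, one_pow, sq_abs] at h
  have h3 : (∑ _i : Fin 3, (1:ℝ)) = 3 := by simp
  rw [h3] at h
  have hnn : 0 ≤ ∑ i, |a i| := Finset.sum_nonneg fun i _ => abs_nonneg _
  have := Real.sqrt_le_sqrt h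
  rwa [Real.sqrt_sq hnn, Real.sqrt_mul (by norm_num)] at this

lemma fderiv_opNorm_le (f : V3 → ℝ) (x : V3) :
    ‖fderiv ℝ f x‖ ≤ Real.sqrt 3 * gradNorm f x := by
  apply ContinuousLinearMap.opNorm_le_bound _
    (mul_nonneg (Real.sqrt_nonneg 3) (Real.sqrt_nonneg _))
  intro v
  set L := fderiv ℝ f x with hL
  have hv : ∑ i, Pi.single i (v i) = v := by
    ext j; simp [Finset.sum_apply, Pi.single_apply]
  have h1 : L v = ∑ i, v i * L (Pi.single i 1) := by
    conv_lhs => rw [← hv]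
    rw [map_sum]
    congr 1; ext i
    have : (Pi.single i (v i) : V3) = v i • (Pi.single i 1 : V3) := by
      rw [← Pi.single_smul]; simp
    rw [this, _root_.map_smul, smul_eq_mul]
  rw [h1]
  calc ‖∑ i, v i * L (Pi.single i 1)‖ ≤ ∑ i, ‖v i * L (Pi.single i 1)‖ :=
        norm_sum_le _ _
    _ ≤ ∑ i, ‖v‖ * |L (Pi.single i 1)| := by
        apply Finset.sum_le_sum
        intro i _
        rw [norm_mul]
        exact mul_le_mul_of_nonneg_right (norm_le_pi_norm v i) (abs_nonneg _)
    _ = ‖v‖ * ∑ i, |L (Pi.single i 1)| := by rw [Finset.mul_sum]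
    _ ≤ ‖v‖ * (Real.sqrt 3 * Real.sqrt (∑ i, (L (Pi.single i 1)) ^ 2)) :=
        mul_le_mul_of_nonneg_left (sum_abs_le _) (norm_nonneg v)
    _ = Real.sqrt 3 * gradNorm f x * ‖v‖ := by rw [gradNorm, ← hL]; ring

lemma lipschitz_bound (f : V3 → ℝ) (hf : ContDiff ℝ (⊤ : ℕ∞) f)
    (hper : ∀ (x : V3) (k : Fin 3 → ℤ), f (x + (2 * Real.pi) • fun i => (k i : ℝ)) = f x)
    (x y : V3) : |f y - f x| ≤ Real.sqrt 3 * C1norm f * ‖y - x‖ := by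
  apply (convex_univ (𝕜 := ℝ) (E := V3)).norm_image_sub_le_of_norm_fderiv_le
    (fun z _ => (hf.differentiable (by simp)) z) _ (Set.mem_univ x) (Set.mem_univ y)
  intro z _
  exact (fderiv_opNorm_le f z).trans
    (mul_le_mul_of_nonneg_left (gradNorm_le_C1 f hf hper z) (Real.sqrt_nonneg 3))

def smallBox (c : ℝ) : Set V3 := Set.univ.pi fun _ => Set.Ioc 0 c
def shiftBox (c : ℝ) {N : ℕ} (k : Fin 3 → Fin N) : Set V3 :=
  Set.univ.pi fun i => Set.Ioc ((k i : ℝ) * c) (((k i : ℝ) + 1) * c)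

lemma measurable_shiftBox (c : ℝ) {N : ℕ} (k : Fin 3 → Fin N) :
    MeasurableSet (shiftBox c k) :=
  MeasurableSet.univ_pi fun i => measurableSet_Ioc

lemma mem_Ioc_decomp {c : ℝ} (hc : 0 < c) {N : ℕ} {t : ℝ} (ht : t ∈ Set.Ioc 0 (N * c)) :
    ∃ j : Fin N, t ∈ Set.Ioc ((j:ℝ) * c) (((j:ℝ) + 1) * c) := by
  have htc : 0 < t / c := div_pos ht.1 hc
  have hm1 : 1 ≤ ⌈t / c⌉₊ := Nat.one_le_iff_ne_zero.2 (by positivity)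
  have hmN : ⌈t / c⌉₊ ≤ N := Nat.ceil_le.2 (by rw [div_le_iff₀ hc]; exact ht.2)
  have hN : 0 < N := lt_of_lt_of_le hm1 hmN
  refine ⟨⟨⌈t / c⌉₊ - 1, by omega⟩, ?_, ?_⟩
  · have : ((⌈t / c⌉₊ - 1 : ℕ) : ℝ) < t / c := by
      exact_mod_cast Nat.lt_ceil.1 (by omega)
    calc ((⌈t / c⌉₊ - 1 : ℕ) : ℝ) * c < (t / c) * c := by
          exact mul_lt_mul_of_pos_right this hc
      _ = t := div_mul_cancel₀ t hc.ne'
  · have h1 : t / c ≤ ⌈t / c⌉₊ := Nat.le_ceil _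
    have h2 : ((⌈t / c⌉₊ - 1 : ℕ) : ℝ) + 1 = (⌈t / c⌉₊ : ℝ) := by
      have : (1:ℕ) ≤ ⌈t / c⌉₊ := hm1
      push_cast [Nat.cast_sub this]
      ring
    rw [h2]
    calc t = (t / c) * c := (div_mul_cancel₀ t hc.ne').symm
      _ ≤ (⌈t / c⌉₊ : ℝ) * c := mul_le_mul_of_nonneg_right h1 hc.le

lemma torusBox_eq_iUnion {N : ℕ} (hN : 0 < N) :
    torusBox = ⋃ k : Fin 3 → Fin N, shiftBox (2 * Real.pi / N) k := by
  have hc : (0:ℝ) < 2 * Real.pi / N := by positivity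
  have hNc : (N : ℝ) * (2 * Real.pi / N) = 2 * Real.pi := by
    field_simp
  ext x
  simp only [torusBox, Set.mem_pi, Set.mem_univ, forall_true_left, Set.mem_iUnion]
  constructor
  · intro hx
    have : ∀ i, ∃ j : Fin N, x i ∈ Set.Ioc ((j:ℝ) * (2*Real.pi/N)) (((j:ℝ)+1) * (2*Real.pi/N)) := by
      intro i
      exact mem_Ioc_decomp hc (by rw [hNc]; exact hx i)
    choose k hk using this
    exact ⟨k, fun i _ => hk i⟩
  · rintro ⟨k, hk⟩ i
    have h := hk i (Set.mem_univ i)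
    have h1 : (0:ℝ) ≤ (k i : ℝ) * (2*Real.pi/N) := by positivity
    have h2 : ((k i : ℝ) + 1) * (2*Real.pi/N) ≤ 2 * Real.pi := by
      have : ((k i : ℝ) + 1) ≤ N := by exact_mod_cast Nat.succ_le_of_lt (k i).2
      calc ((k i : ℝ) + 1) * (2*Real.pi/N) ≤ (N:ℝ) * (2*Real.pi/N) :=
            mul_le_mul_of_nonneg_right this hc.le
        _ = 2 * Real.pi := hNc
    exact ⟨lt_of_le_of_lt h1 h.1, h.2.trans h2⟩

lemma shiftBox_disjoint {c : ℝ} {N : ℕ} : Pairwise (Function.onFun Disjoint (shiftBox c (N := N))) := by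
  intro k k' hkk'
  rw [Function.onFun, Set.disjoint_left]
  intro x hx hx'
  apply hkk'
  funext i
  have h := hx i (Set.mem_univ i)
  have h' := hx' i (Set.mem_univ i)
  by_contra hne
  have hc : 0 < c := by
    by_contra hc
    push_neg at hc
    have := h.1.trans_le h.2
    nlinarith [(k i).2]
  rcases lt_or_gt_of_ne (fun heq : (k i : ℝ) = (k' i : ℝ) => hne (by exact_mod_cast Fin.ext (by exact_mod_cast heq))) with hlt | hlt
  · have : ((k i : ℝ) + 1) ≤ (k' i : ℝ) := by
      have : (k i : ℕ) < (k' i : ℕ) := by exact_mod_cast hlt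
      exact_mod_cast this
    nlinarith [h.2, h'.1]
  · have : ((k' i : ℝ) + 1) ≤ (k i : ℝ) := by
      have : (k' i : ℕ) < (k i : ℕ) := by exact_mod_cast hlt
      exact_mod_cast this
    nlinarith [h'.2, h.1]

lemma lintegral_decomp {N : ℕ} (hN : 0 < N) (F : V3 → ℝ≥0∞) :
    ∫⁻ x in torusBox, F x = ∑ k : Fin 3 → Fin N, ∫⁻ x in shiftBox (2 * Real.pi / N) k, F x := by
  rw [torusBox_eq_iUnion hN, lintegral_iUnion (fun k => measurable_shiftBox _ k) shiftBox_disjoint]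
  exact tsum_fintype _

lemma lintegral_shift {c : ℝ} {N : ℕ} (k : Fin 3 → Fin N) (F : V3 → ℝ≥0∞) :
    ∫⁻ x in shiftBox c k, F x = ∫⁻ y in smallBox c, F (y + fun i => (k i : ℝ) * c) := by
  set v : V3 := fun i => (k i : ℝ) * c
  have hpre : (fun y : V3 => y + v) ⁻¹' (shiftBox c k) = smallBox c := by
    ext y
    simp only [Set.mem_preimage, shiftBox, smallBox, Set.mem_pi, Set.mem_univ, forall_true_left]
    have hexp : ∀ i, ((k i : ℝ) + 1) * c = (k i : ℝ) * c + c := fun i => by ring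
    constructor
    · intro h i
      have h2 := h i
      simp only [Set.mem_Ioc, Pi.add_apply] at h2
      have hvi : v i = (k i : ℝ) * c := rfl
      rw [hvi, hexp i] at h2
      exact ⟨by linarith [h2.1], by linarith [h2.2]⟩
    · intro h i
      have h2 := h i
      simp only [Set.mem_Ioc] at h2
      simp only [Set.mem_Ioc, Pi.add_apply]
      have hvi : v i = (k i : ℝ) * c := rfl
      rw [hvi, hexp i]
      exact ⟨by linarith [h2.1], by linarith [h2.2]⟩
  rw [← hpre]
  exact ((measurePreserving_add_right volume v).setLIntegral_comp_preimage_emb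
    (measurableEmbedding_addRight v) F _).symm

noncomputable def Cval (pr : ℝ) : ℝ := (pr * Real.sqrt 3 * (2 * Real.pi)) ^ (1 / pr)

lemma main_finite (p : ℝ≥0∞) (hp1 : 1 ≤ p) (hptop : p ≠ ⊤)
    (f g : (Fin 3 → ℝ) → ℝ) (N : ℕ) (hN : 0 < N)
    (hf : ContDiff ℝ (⊤ : ℕ∞) f) (hg : ContDiff ℝ (⊤ : ℕ∞) g)
    (hfper : ∀ (x : Fin 3 → ℝ) (k : Fin 3 → ℤ),
        f (x + (2 * Real.pi) • fun i => (k i : ℝ)) = f x)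
    (hgper : ∀ (x : Fin 3 → ℝ) (k : Fin 3 → ℤ),
        g (x + (2 * Real.pi / N) • fun i => (k i : ℝ)) = g x) :
    eLpNorm (fun x => f x * g x) p (volume.restrict torusBox)
        ≤ eLpNorm f p (volume.restrict torusBox) * eLpNorm g p (volume.restrict torusBox)
          + (Cval p.toReal).toNNReal * (N : ℝ≥0∞) ^ (-(1 : ℝ) / p.toReal) * ENNReal.ofReal (C1norm f)
            * eLpNorm g p (volume.restrict torusBox) := by
  have hp0 : p ≠ 0 := (lt_of_lt_of_le one_pos hp1).ne'
  set pr := p.toReal with hprdef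
  have hpr1 : 1 ≤ pr := by
    have h := ENNReal.toReal_mono hptop hp1
    simpa using h
  have hpr0 : 0 < pr := lt_of_lt_of_le one_pos hpr1
  have h1pr0 : (0:ℝ) ≤ 1 / pr := by positivity
  set M := C1norm f with hMdef
  have hM0 : 0 ≤ M := (abs_nonneg (f 0)).trans (abs_le_C1 f hf hfper 0)
  have hπ : 0 < Real.pi := Real.pi_pos
  set c : ℝ := 2 * Real.pi / N with hcdef
  have hc : 0 < c := by positivity
  set Q : Set V3 := smallBox c with hQdef
  have mf : Measurable f := hf.continuous.measurable
  have mg : Measurable g := hg.continuous.measurable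
  set Ff : V3 → ℝ≥0∞ := fun x => (‖f x‖₊ : ℝ≥0∞) ^ pr with hFf
  set Fg : V3 → ℝ≥0∞ := fun x => (‖g x‖₊ : ℝ≥0∞) ^ pr with hFg
  have mFf : Measurable Ff := (mf.nnnorm.coe_nnreal_ennreal).pow_const pr
  have mFg : Measurable Fg := (mg.nnnorm.coe_nnreal_ennreal).pow_const pr
  have hgshift : ∀ (k : Fin 3 → Fin N) (y : V3), g (y + fun i => ((k i : ℝ)) * c) = g y := by
    intro k y
    have h := hgper y fun i => ((k i : ℕ) : ℤ)
    have he : ((2 * Real.pi / N) • fun i => ((((k i : ℕ) : ℤ)) : ℝ)) = (fun i => ((k i : ℝ)) * c) := by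
      funext i
      simp only [Pi.smul_apply, smul_eq_mul, hcdef]
      push_cast
      ring
    rwa [he] at h
  have hvolQ : volume Q = ENNReal.ofReal c ^ 3 := by
    rw [hQdef, smallBox, volume_pi_pi]
    simp [Real.volume_Ioc]
  have hvQ0 : volume Q ≠ 0 := by
    rw [hvolQ]
    simp [pow_ne_zero, ENNReal.ofReal_eq_zero, not_le, hc]
  have hvQtop : volume Q ≠ ∞ := by
    rw [hvolQ]
    exact ENNReal.pow_ne_top ENNReal.ofReal_ne_top
  -- pointwise rpow estimate
  have key_pt : ∀ a b : V3, ‖a - b‖ ≤ c →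
      |f a| ^ pr ≤ |f b| ^ pr + pr * Real.sqrt 3 * M ^ pr * c := by
    intro a b hab
    have hfa : |f a| ≤ M := abs_le_C1 f hf hfper a
    have hfb : |f b| ≤ M := abs_le_C1 f hf hfper b
    have hD0 : 0 ≤ pr * Real.sqrt 3 * M ^ pr * c := by positivity
    rcases le_total (|f a|) (|f b|) with h | h
    · have := Real.rpow_le_rpow (abs_nonneg _) h hpr0.le
      linarith
    · have h1 := rpow_sub_rpow_le pr M (|f a|) (|f b|) hpr1 (abs_nonneg _) h hfa
      have h3 : |f a| - |f b| ≤ |f a - f b| := abs_sub_abs_le_abs_sub _ _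
      have h4 := lipschitz_bound f hf hfper b a
      have h5 : Real.sqrt 3 * M * ‖a - b‖ ≤ Real.sqrt 3 * M * c := by
        apply mul_le_mul_of_nonneg_left hab
        positivity
      have h2 : |f a| - |f b| ≤ Real.sqrt 3 * M * c := by
        rw [hMdef]; rw [hMdef] at h5; linarith
      have hMM : M ^ (pr - 1) * M ≤ M ^ pr := by
        rcases eq_or_lt_of_le hM0 with hM | hM
        · rw [← hM, Real.zero_rpow hpr0.ne', mul_zero]
        · rw [← Real.rpow_add_one hM.ne' (pr - 1), sub_add_cancel]
      have hstep : pr * M ^ (pr - 1) * (|f a| - |f b|) ≤ pr * Real.sqrt 3 * M ^ pr * c := by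
        calc pr * M ^ (pr - 1) * (|f a| - |f b|)
            ≤ pr * M ^ (pr - 1) * (Real.sqrt 3 * M * c) := by
              apply mul_le_mul_of_nonneg_left h2
              positivity
          _ = pr * Real.sqrt 3 * (M ^ (pr - 1) * M) * c := by ring
          _ ≤ pr * Real.sqrt 3 * M ^ pr * c := by
              apply mul_le_mul_of_nonneg_right _ hc.le
              apply mul_le_mul_of_nonneg_left hMM
              positivity
      linarith
  have coeF : ∀ w, Ff w = ENNReal.ofReal (|f w| ^ pr) := by
    intro w
    rw [hFf]
    simp only
    rw [← enorm_eq_nnnorm, ← ofReal_norm, ENNReal.ofReal_rpow_of_nonneg (norm_nonneg _) hpr0.le,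
      Real.norm_eq_abs]
  set δ : ℝ≥0∞ := ENNReal.ofReal (pr * Real.sqrt 3 * M ^ pr * c) with hδ
  have keyC : ∀ (k : Fin 3 → Fin N), ∀ y ∈ Q,
      Ff (y + fun i => ((k i : ℝ)) * c) * volume Q
        ≤ (∫⁻ z in Q, Ff (z + fun i => ((k i : ℝ)) * c)) + volume Q * δ := by
    intro k y hy
    have hle : ∀ z ∈ Q, Ff (y + fun i => ((k i : ℝ)) * c)
        ≤ Ff (z + fun i => ((k i : ℝ)) * c) + δ := by
      intro z hz
      rw [coeF, coeF, hδ, ← ENNReal.ofReal_add (by positivity) (by positivity)]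
      apply ENNReal.ofReal_le_ofReal
      have hsub : (y + fun i => ((k i : ℝ)) * c) - (z + fun i => ((k i : ℝ)) * c) = y - z := by
        abel
      have hdist : ‖(y + fun i => ((k i : ℝ)) * c) - (z + fun i => ((k i : ℝ)) * c)‖ ≤ c := by
        rw [hsub, pi_norm_le_iff_of_nonneg hc.le]
        intro i
        have hyi := hy i (Set.mem_univ i)
        have hzi := hz i (Set.mem_univ i)
        simp only [Set.mem_Ioc] at hyi hzi
        rw [Real.norm_eq_abs, Pi.sub_apply, abs_le]
        exact ⟨by linarith [hyi.1, hzi.2], by linarith [hyi.2, hzi.1]⟩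
      exact key_pt _ _ hdist
    calc Ff (y + fun i => ((k i : ℝ)) * c) * volume Q
        = ∫⁻ _ in Q, Ff (y + fun i => ((k i : ℝ)) * c) := by
          rw [setLIntegral_const]
      _ ≤ ∫⁻ z in Q, (Ff (z + fun i => ((k i : ℝ)) * c) + δ) := by
          apply setLIntegral_mono ((mFf.comp (measurable_add_const _)).add_const δ)
          exact hle
      _ = (∫⁻ z in Q, Ff (z + fun i => ((k i : ℝ)) * c)) + volume Q * δ := by
          rw [lintegral_add_right _ measurable_const, setLIntegral_const, mul_comm δ]
  set n : ℝ≥0∞ := ((N : ℝ≥0∞)) ^ (3:ℕ) with hn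
  have hn0 : n ≠ 0 := by
    rw [hn]
    simp [hN.ne']
  have hntop : n ≠ ∞ := by
    rw [hn]
    simp [ENNReal.pow_ne_top]
  have card3 : ((Fintype.card (Fin 3 → Fin N) : ℕ) : ℝ≥0∞) = n := by
    rw [Fintype.card_fun, hn]
    push_cast
    simp
  set If := ∫⁻ x in torusBox, Ff x with hIf
  set Ig := ∫⁻ x in torusBox, Fg x with hIg
  have keyD : ∀ y ∈ Q, (∑ k : Fin 3 → Fin N, Ff (y + fun i => ((k i : ℝ)) * c)) * volume Q
      ≤ If + n * (volume Q * δ) := by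
    intro y hy
    rw [Finset.sum_mul]
    calc ∑ k : Fin 3 → Fin N, Ff (y + fun i => ((k i : ℝ)) * c) * volume Q
        ≤ ∑ k : Fin 3 → Fin N,
            ((∫⁻ z in Q, Ff (z + fun i => ((k i : ℝ)) * c)) + volume Q * δ) :=
          Finset.sum_le_sum fun k _ => keyC k y hy
      _ = (∑ k : Fin 3 → Fin N, ∫⁻ z in Q, Ff (z + fun i => ((k i : ℝ)) * c))
            + n * (volume Q * δ) := by
          rw [Finset.sum_add_distrib, Finset.sum_const, Finset.card_univ, nsmul_eq_mul, card3]
      _ = If + n * (volume Q * δ) := by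
          congr 1
          rw [hIf, lintegral_decomp hN Ff]
          exact (Finset.sum_congr rfl fun k _ => (lintegral_shift k Ff)).symm
  set E : ℝ≥0∞ := (If + n * (volume Q * δ)) / volume Q with hE
  have keyD' : ∀ y ∈ Q, (∑ k : Fin 3 → Fin N, Ff (y + fun i => ((k i : ℝ)) * c)) ≤ E := by
    intro y hy
    rw [hE]
    rw [ENNReal.le_div_iff_mul_le (Or.inl hvQ0) (Or.inl hvQtop)]
    exact keyD y hy
  have hQg : ∫⁻ y in Q, Fg y = Ig / n := by
    have h1 : Ig = n * ∫⁻ y in Q, Fg y := by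
      rw [hIg, lintegral_decomp hN Fg]
      have h2 : ∀ k : Fin 3 → Fin N, ∫⁻ x in shiftBox c k, Fg x = ∫⁻ y in Q, Fg y := by
        intro k
        rw [lintegral_shift k Fg]
        apply lintegral_congr
        intro y
        rw [hFg]
        simp only
        rw [hgshift k y]
      rw [Finset.sum_congr rfl fun k _ => h2 k, Finset.sum_const, Finset.card_univ,
        nsmul_eq_mul, card3]
    rw [ENNReal.eq_div_iff hn0 hntop, h1]
  have S_eq : (∫⁻ x in torusBox, (‖f x * g x‖₊ : ℝ≥0∞) ^ pr)
      = ∫⁻ y in Q, (∑ k : Fin 3 → Fin N, Ff (y + fun i => ((k i : ℝ)) * c)) * Fg y := by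
    rw [lintegral_decomp hN (fun x => (‖f x * g x‖₊ : ℝ≥0∞) ^ pr)]
    have h1 : ∀ k : Fin 3 → Fin N,
        ∫⁻ x in shiftBox c k, (‖f x * g x‖₊ : ℝ≥0∞) ^ pr
          = ∫⁻ y in Q, Ff (y + fun i => ((k i : ℝ)) * c) * Fg y := by
      intro k
      rw [lintegral_shift k (fun x => (‖f x * g x‖₊ : ℝ≥0∞) ^ pr)]
      apply lintegral_congr
      intro y
      rw [hFf, hFg]
      simp only
      rw [hgshift k y, nnnorm_mul, ENNReal.coe_mul,
        ENNReal.mul_rpow_of_nonneg _ _ hpr0.le]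
    rw [Finset.sum_congr rfl fun k _ => h1 k]
    rw [← lintegral_finset_sum' (f := fun (k : Fin 3 → Fin N) (y : V3) =>
        Ff (y + fun i => ((k i : ℝ)) * c) * Fg y) Finset.univ
      (fun k _ => (((mFf.comp (measurable_add_const _)).mul mFg).aemeasurable))]
    apply lintegral_congr
    intro y
    rw [Finset.sum_mul]
  have S_le : (∫⁻ x in torusBox, (‖f x * g x‖₊ : ℝ≥0∞) ^ pr) ≤ E * (Ig / n) := by
    rw [S_eq]
    calc ∫⁻ y in Q, (∑ k : Fin 3 → Fin N, Ff (y + fun i => ((k i : ℝ)) * c)) * Fg y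
        ≤ ∫⁻ y in Q, E * Fg y :=
          setLIntegral_mono (measurable_const.mul mFg)
            (fun y hy => mul_le_mul_left (keyD' y hy) _)
      _ = E * ∫⁻ y in Q, Fg y := lintegral_const_mul E mFg
      _ = E * (Ig / n) := by rw [hQg]
  have halg : E * (Ig / n) ≤ If * Ig + δ * Ig := by
    have h2π1 : (1:ℝ≥0∞) ≤ ENNReal.ofReal (2 * Real.pi) := by
      rw [← ENNReal.ofReal_one]
      apply ENNReal.ofReal_le_ofReal
      nlinarith [Real.pi_gt_three]
    have hEexp : E * (Ig / n)
        = If * Ig * ((volume Q)⁻¹ * n⁻¹)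
          + (volume Q * (volume Q)⁻¹) * (n * n⁻¹) * (δ * Ig) := by
      rw [hE, ENNReal.div_eq_inv_mul, ENNReal.div_eq_inv_mul]
      ring
    rw [hEexp, ENNReal.mul_inv_cancel hvQ0 hvQtop, ENNReal.mul_inv_cancel hn0 hntop,
      one_mul, one_mul]
    apply add_le_add_left
    have hle1 : (volume Q)⁻¹ * n⁻¹ ≤ 1 := by
      rw [← ENNReal.mul_inv (Or.inl hvQ0) (Or.inl hvQtop), ENNReal.inv_le_one]
      have hca : ENNReal.ofReal (2 * Real.pi) = ENNReal.ofReal c * (N : ℝ≥0∞) := by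
        rw [← ENNReal.ofReal_natCast N, ← ENNReal.ofReal_mul hc.le]
        congr 1
        rw [hcdef]
        field_simp
      have ha : (1:ℝ≥0∞) ≤ ENNReal.ofReal c * (N : ℝ≥0∞) := hca ▸ h2π1
      calc (1:ℝ≥0∞) = 1 ^ (3:ℕ) := (one_pow 3).symm
        _ ≤ (ENNReal.ofReal c * (N : ℝ≥0∞)) ^ (3:ℕ) := pow_le_pow_left' ha 3
        _ = volume Q * n := by rw [hvolQ, hn]; ring
    calc If * Ig * ((volume Q)⁻¹ * n⁻¹) ≤ If * Ig * 1 := mul_le_mul_right hle1 _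
      _ = If * Ig := mul_one _
  -- identify eLpNorms and conclude
  have hLfg := eLpNorm_eq_lintegral_rpow_enorm_toReal (f := fun x => f x * g x) hp0 hptop
    (μ := volume.restrict torusBox)
  have hLf := eLpNorm_eq_lintegral_rpow_enorm_toReal (f := f) hp0 hptop (μ := volume.restrict torusBox)
  have hLg := eLpNorm_eq_lintegral_rpow_enorm_toReal (f := g) hp0 hptop (μ := volume.restrict torusBox)
  rw [hLfg, hLf, hLg]
  have hδr : δ ^ (1/pr)
      ≤ ((Cval pr).toNNReal : ℝ≥0∞) * (N : ℝ≥0∞) ^ (-(1:ℝ)/pr) * ENNReal.ofReal M := by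
    have hA0 : (0:ℝ) ≤ pr * Real.sqrt 3 * (2 * Real.pi) := by positivity
    have hδsplit : δ = ENNReal.ofReal (pr * Real.sqrt 3 * (2 * Real.pi) * M ^ pr)
        * ((N : ℝ≥0∞))⁻¹ := by
      rw [hδ]
      have hr : pr * Real.sqrt 3 * M ^ pr * c
          = (pr * Real.sqrt 3 * (2 * Real.pi) * M ^ pr) / N := by
        rw [hcdef]
        field_simp
      rw [hr, ENNReal.ofReal_div_of_pos (by exact_mod_cast hN), ENNReal.ofReal_natCast,
        div_eq_mul_inv]
    rw [hδsplit, ENNReal.mul_rpow_of_nonneg _ _ h1pr0]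
    have hNr : (((N : ℝ≥0∞))⁻¹) ^ (1/pr) = (N : ℝ≥0∞) ^ (-(1:ℝ)/pr) := by
      rw [ENNReal.inv_rpow, ← ENNReal.rpow_neg, neg_div]
    have hAr : (ENNReal.ofReal (pr * Real.sqrt 3 * (2 * Real.pi) * M ^ pr)) ^ (1/pr)
        = ((Cval pr).toNNReal : ℝ≥0∞) * ENNReal.ofReal M := by
      rw [ENNReal.ofReal_rpow_of_nonneg (by positivity) h1pr0]
      have hreal : (pr * Real.sqrt 3 * (2 * Real.pi) * M ^ pr) ^ (1/pr)
          = Cval pr * M := by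
        unfold Cval
        rw [Real.mul_rpow hA0 (Real.rpow_nonneg hM0 pr), ← Real.rpow_mul hM0,
          mul_one_div, div_self hpr0.ne', Real.rpow_one]
      have hCval0 : 0 ≤ Cval pr := Real.rpow_nonneg hA0 _
      rw [hreal, ENNReal.ofReal_mul hCval0]
      rfl
    rw [hNr, hAr]
    apply le_of_eq
    ring
  calc (∫⁻ x in torusBox, (‖f x * g x‖₊ : ℝ≥0∞) ^ pr) ^ (1/pr)
      ≤ (If * Ig + δ * Ig) ^ (1/pr) :=
        ENNReal.rpow_le_rpow (S_le.trans halg) h1pr0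
    _ ≤ (If * Ig) ^ (1/pr) + (δ * Ig) ^ (1/pr) :=
        ENNReal.rpow_add_le_add_rpow _ _ h1pr0 (by rw [div_le_one hpr0]; exact hpr1)
    _ = If ^ (1/pr) * Ig ^ (1/pr) + δ ^ (1/pr) * Ig ^ (1/pr) := by
        rw [ENNReal.mul_rpow_of_nonneg _ _ h1pr0, ENNReal.mul_rpow_of_nonneg _ _ h1pr0]
    _ ≤ If ^ (1/pr) * Ig ^ (1/pr)
          + ((Cval pr).toNNReal : ℝ≥0∞) * (N : ℝ≥0∞) ^ (-(1:ℝ)/pr) * ENNReal.ofReal M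
            * Ig ^ (1/pr) := by
        apply add_le_add_right
        exact mul_le_mul_left hδr _

/-- Improved Hölder inequality for a product of a slow function and a
`(𝕋/N)³`-periodic fast oscillation. -/
theorem stmt_9 : ∀ p : ℝ≥0∞, 1 ≤ p → ∃ C : ℝ≥0,
    ∀ (f g : (Fin 3 → ℝ) → ℝ) (N : ℕ), 0 < N →
      ContDiff ℝ (⊤ : ℕ∞) f → ContDiff ℝ (⊤ : ℕ∞) g →
      -- `f`, `g` are functions on the torus
      (∀ (x : Fin 3 → ℝ) (k : Fin 3 → ℤ),
        f (x + (2 * Real.pi) • fun i => (k i : ℝ)) = f x) →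
      -- `g` is `(𝕋/N)³`-periodic
      (∀ (x : Fin 3 → ℝ) (k : Fin 3 → ℤ),
        g (x + (2 * Real.pi / N) • fun i => (k i : ℝ)) = g x) →
      eLpNorm (fun x => f x * g x) p (volume.restrict torusBox)
        ≤ eLpNorm f p (volume.restrict torusBox) * eLpNorm g p (volume.restrict torusBox)
          + C * (N : ℝ≥0∞) ^ (-(1 : ℝ) / p.toReal) * ENNReal.ofReal (C1norm f)
            * eLpNorm g p (volume.restrict torusBox) := by
  intro p hp1
  by_cases hptop : p = ∞
  · refine ⟨1, ?_⟩
    intro f g N hN hf hg hfper hgper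
    subst hptop
    have hM : ∀ x, |f x| ≤ C1norm f := abs_le_C1 f hf hfper
    have key : eLpNormEssSup (fun x => f x * g x) (volume.restrict torusBox)
        ≤ ENNReal.ofReal (C1norm f) * eLpNormEssSup g (volume.restrict torusBox) := by
      simp only [eLpNormEssSup]
      rw [← ENNReal.essSup_const_mul]
      refine essSup_mono_ae ?_
      apply Filter.Eventually.of_forall
      intro x
      calc (‖f x * g x‖₊ : ℝ≥0∞) = (‖f x‖₊ : ℝ≥0∞) * (‖g x‖₊ : ℝ≥0∞) := by
            rw [nnnorm_mul]; push_cast; ring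
        _ ≤ ENNReal.ofReal (C1norm f) * (‖g x‖₊ : ℝ≥0∞) := by
            apply mul_le_mul_left
            rw [← enorm_eq_nnnorm, ← ofReal_norm]
            exact ENNReal.ofReal_le_ofReal (hM x)
    rw [eLpNorm_exponent_top]
    calc eLpNormEssSup (fun x => f x * g x) (volume.restrict torusBox)
        ≤ ENNReal.ofReal (C1norm f) * eLpNormEssSup g (volume.restrict torusBox) := key
      _ = (1:ℝ≥0) * (N : ℝ≥0∞) ^ (-(1 : ℝ) / (⊤ : ℝ≥0∞).toReal) * ENNReal.ofReal (C1norm f)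
            * eLpNorm g ⊤ (volume.restrict torusBox) := by
          rw [ENNReal.toReal_top, div_zero, ENNReal.rpow_zero, eLpNorm_exponent_top]
          simp [one_mul]
      _ ≤ _ := le_add_self.trans_eq (by rw [add_comm])
  · exact ⟨(Cval p.toReal).toNNReal, fun f g N hN hf hg hfper hgper =>
      main_finite p hp1 hptop f g N hN hf hg hfper hgper⟩
end
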